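/- arXiv:0901.0824 — 2 statements merged into one kernel-verified Lean document; each statement's English description precedes it below -/
import Mathlib

section
/- If the gain matrix V is irreducible and p̄ ∈ P is a max-min SIR-balanced power vector, then all weighted SIRs are balanced at p̄: there exists a constant β > 0 such that γ_k/SIR_k(p̄) = β for every k = 1,…,K. -/
open Matrix

/-- A nonnegative square matrix is irreducible. -/
def MatIrred {m : Type*} [Fintype m] (M : Matrix m m ℝ) : Prop :=
  ∀ S : Set m, S.Nonempty → S ≠ Set.univ → ∃ i ∈ S, ∃ j ∉ S, 0 < M i j

/-- Spectral radius of a real square matrix (largest modulus of a complex eigenvalue). -/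
noncomputable def specRad {m : Type*} [Fintype m] [DecidableEq m] (M : Matrix m m ℝ) : ℝ :=
  sSup ((fun w : ℂ => ‖w‖) '' spectrum ℂ (M.map fun x => (x : ℂ)))

/-- SIR of link `k` under power vector `p`. -/
noncomputable def SIR {K : ℕ} (V : Matrix (Fin K) (Fin K) ℝ) (z : Fin K → ℝ)
    (p : Fin K → ℝ) (k : Fin K) : ℝ :=
  p k / (V.mulVec p k + z k)

/-- The polytope of admissible power vectors. -/
def Pset {K N : ℕ} (C : Matrix (Fin N) (Fin K) ℝ) (phat : Fin N → ℝ) :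
    Set (Fin K → ℝ) :=
  {p | (∀ k, 0 ≤ p k) ∧ ∀ n, C.mulVec p n ≤ phat n}

/-- Admissible power vectors with all entries positive. -/
def Pplus {K N : ℕ} (C : Matrix (Fin N) (Fin K) ℝ) (phat : Fin N → ℝ) :
    Set (Fin K → ℝ) :=
  {p ∈ Pset C phat | ∀ k, 0 < p k}

/-- Normalized power-constraint functions `gₙ(p) = cₙᵀ p / Pₙ`. -/
noncomputable def gcon {K N : ℕ} (C : Matrix (Fin N) (Fin K) ℝ) (phat : Fin N → ℝ)
    (n : Fin N) (p : Fin K → ℝ) : ℝ :=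
  C.mulVec p n / phat n

/-- The matrices `B⁽ⁿ⁾ = Γ (V + (1/Pₙ) z cₙᵀ)`. -/
noncomputable def Bmat {K N : ℕ} (V : Matrix (Fin K) (Fin K) ℝ) (z : Fin K → ℝ)
    (γ : Fin K → ℝ) (C : Matrix (Fin N) (Fin K) ℝ) (phat : Fin N → ℝ) (n : Fin N) :
    Matrix (Fin K) (Fin K) ℝ :=
  Matrix.diagonal γ * (V + (phat n)⁻¹ • Matrix.vecMulVec z (C n))

/-- The extended `(K+1)×(K+1)` matrices `A⁽ⁿ⁾`. -/
noncomputable def Amat {K N : ℕ} (V : Matrix (Fin K) (Fin K) ℝ) (z : Fin K → ℝ)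
    (γ : Fin K → ℝ) (C : Matrix (Fin N) (Fin K) ℝ) (phat : Fin N → ℝ) (n : Fin N) :
    Matrix (Fin (K+1)) (Fin (K+1)) ℝ :=
  Matrix.of fun i j =>
    if hi : (i : ℕ) < K then
      if hj : (j : ℕ) < K then γ ⟨i, hi⟩ * V ⟨i, hi⟩ ⟨j, hj⟩
      else γ ⟨i, hi⟩ * z ⟨i, hi⟩
    else
      if hj : (j : ℕ) < K then (phat n)⁻¹ * ∑ k, C n k * (γ k * V k ⟨j, hj⟩)
      else (phat n)⁻¹ * ∑ k, C n k * (γ k * z k)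

/-- `pbar` is a max-min SIR-balanced power vector: it maximizes
`p ↦ min_k SIR_k(p)/γ_k` over the set `P`. -/
def MaxMinBalanced {K N : ℕ} (V : Matrix (Fin K) (Fin K) ℝ) (z : Fin K → ℝ)
    (γ : Fin K → ℝ) (C : Matrix (Fin N) (Fin K) ℝ) (phat : Fin N → ℝ)
    (pbar : Fin K → ℝ) : Prop :=
  pbar ∈ Pset C phat ∧
    ∀ p ∈ Pset C phat, (⨅ k, SIR V z p k / γ k) ≤ ⨅ k, SIR V z pbar k / γ k

/-- The set `N₀(p)` of active power constraints. -/
def activeSet {K N : ℕ} (C : Matrix (Fin N) (Fin K) ℝ) (phat : Fin N → ℝ)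
    (p : Fin K → ℝ) : Set (Fin N) :=
  {n | gcon C phat n p = 1 ∧ ∀ m, gcon C phat m p ≤ gcon C phat n p}

/-- The (relatively open) probability simplex `Π⁺_K`. -/
def PosSimplex (K : ℕ) : Set (Fin K → ℝ) :=
  {w | (∀ k, 0 < w k) ∧ ∑ k, w k = 1}

/-- The feasible QoS region `F`. -/
def QoSRegion {K N : ℕ} (V : Matrix (Fin K) (Fin K) ℝ) (z : Fin K → ℝ)
    (γ : Fin K → ℝ) (C : Matrix (Fin N) (Fin K) ℝ) (phat : Fin N → ℝ)
    (φ : ℝ → ℝ) : Set (Fin K → ℝ) :=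
  {q | ∃ p ∈ Pplus C phat, ∀ k, q k = φ (SIR V z p k / γ k)}

/-!
Let `β` be the optimal value `min_k SIR_k(p̄)/γ_k`; it is positive because small constant power
vectors are feasible. Suppose the set `S` of links at level `β` is a proper subset. By
irreducibility some `i ∈ S` is interfered by some `j ∉ S`. Multiplying the powers outside `S` by a
factor `c < 1` close to `1` keeps their weighted SIRs above `β`, does not lower those in `S`, and
lifts link `i` strictly above `β`, so `S` shrinks. Iterating yields a feasible vector whose weighted
SIRs all exceed `β`, contradicting optimality.
-/

open Filter Topology Finset

lemma Matrix.mulVec_mono_of_nonneg {m n : Type*} [Fintype n] {A : Matrix m n ℝ}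
    (hA : ∀ i j, 0 ≤ A i j) {u v : n → ℝ} (huv : u ≤ v) : A *ᵥ u ≤ A *ᵥ v :=
  fun i => dotProduct_le_dotProduct_of_nonneg_left huv (hA i)

lemma Matrix.mulVec_apply_lt_mulVec_apply {m n : Type*} [Fintype n] {A : Matrix m n ℝ}
    (hA : ∀ i j, 0 ≤ A i j) {u v : n → ℝ} (huv : u ≤ v) {i : m} {j : n} (hAij : 0 < A i j)
    (hj : u j < v j) : (A *ᵥ u) i < (A *ᵥ v) i :=
  Finset.sum_lt_sum (fun l _ => mul_le_mul_of_nonneg_left (huv l) (hA i l))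
    ⟨j, mem_univ j, mul_lt_mul_of_pos_left hj hAij⟩

lemma exists_lt_one_forall_lt_mul {ι : Type*} [Finite ι] {P : ι → Prop} {a : ι → ℝ} {β : ℝ}
    (h : ∀ i, P i → β < a i) : ∃ c, 0 < c ∧ c < 1 ∧ ∀ i, P i → β < c * a i := by
  have hnear : ∀ᶠ c in 𝓝 (1 : ℝ), ∀ i, P i → β < c * a i := by
    refine eventually_all.2 fun i => ?_
    by_cases hi : P i
    · have hlim : Tendsto (fun c : ℝ => c * a i) (𝓝 1) (𝓝 (a i)) :=
        (continuous_mul_const (a i)).tendsto' 1 (a i) (one_mul _)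
      exact (hlim.eventually_const_lt (h i hi)).mono fun _ hc _ => hc
    · exact Eventually.of_forall fun _ hPi => absurd hPi hi
  have hunit : ∀ᶠ c in 𝓝[<] (1 : ℝ), c ∈ Set.Ioo 0 1 := Ioo_mem_nhdsLT zero_lt_one
  obtain ⟨c, ⟨hc0, hc1⟩, hc⟩ := (hunit.and (nhdsWithin_le_nhds hnear)).exists
  exact ⟨c, hc0, hc1, hc⟩

section SIR

variable {K N : ℕ} {V : Matrix (Fin K) (Fin K) ℝ} {z γ : Fin K → ℝ}
  {C : Matrix (Fin N) (Fin K) ℝ} {phat : Fin N → ℝ} {p q : Fin K → ℝ} {k : Fin K}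

lemma SIR_denom_pos (hV : ∀ i j, 0 ≤ V i j) (hz : ∀ k, 0 < z k) (hp : 0 ≤ p) (k : Fin K) :
    0 < (V *ᵥ p) k + z k :=
  add_pos_of_nonneg_of_pos (dotProduct_nonneg_of_nonneg (hV k) hp) (hz k)

lemma SIR_pos (hV : ∀ i j, 0 ≤ V i j) (hz : ∀ k, 0 < z k) (hp : 0 ≤ p) (hpk : 0 < p k) :
    0 < SIR V z p k :=
  div_pos hpk (SIR_denom_pos hV hz hp k)

lemma pos_of_SIR_pos (hp : 0 ≤ p) (h : 0 < SIR V z p k) : 0 < p k := by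
  refine (hp k).lt_of_ne fun hpk => h.ne' ?_
  simp [SIR, ← hpk]

lemma mul_SIR_le_SIR_of_le (hV : ∀ i j, 0 ≤ V i j) (hz : ∀ k, 0 < z k) (hq : 0 ≤ q)
    (hqp : q ≤ p) {c : ℝ} (hk : q k = c * p k) :
    c * SIR V z p k ≤ SIR V z q k := by
  rw [SIR, SIR, ← mul_div_assoc, ← hk]
  exact div_le_div_of_nonneg_left (hq k) (SIR_denom_pos hV hz hq k)
    (add_le_add_left (Matrix.mulVec_mono_of_nonneg hV hqp k) _)

lemma SIR_lt_SIR_of_mulVec_lt (hV : ∀ i j, 0 ≤ V i j) (hz : ∀ k, 0 < z k) (hq : 0 ≤ q)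
    (hk : q k = p k) (hpk : 0 < p k) (hlt : (V *ᵥ q) k < (V *ᵥ p) k) :
    SIR V z p k < SIR V z q k := by
  rw [SIR, SIR, hk]
  exact div_lt_div_of_pos_left hpk (SIR_denom_pos hV hz hq k) (by linarith)

lemma mem_Pset_of_le (hC : ∀ n k, 0 ≤ C n k) (hp : p ∈ Pset C phat) (hq : 0 ≤ q)
    (hqp : q ≤ p) : q ∈ Pset C phat :=
  ⟨hq, fun n => (Matrix.mulVec_mono_of_nonneg hC hqp n).trans (hp.2 n)⟩

lemma exists_pos_const_mem_Pset (C : Matrix (Fin N) (Fin K) ℝ) (hphat : ∀ n, 0 < phat n) :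
    ∃ t > 0, (fun _ => t) ∈ Pset C phat := by
  have hnear : ∀ᶠ t in 𝓝 (0 : ℝ), ∀ n, (C *ᵥ fun _ => t) n < phat n := by
    refine eventually_all.2 fun n => ?_
    have hcont : Continuous fun t : ℝ => (C *ᵥ fun _ => t) n :=
      (continuous_apply n).comp
        (continuous_const.matrix_mulVec (continuous_pi fun _ => continuous_id))
    exact (hcont.tendsto' 0 0 (by simp [Matrix.mulVec, dotProduct])).eventually_lt_const (hphat n)
  have hpos : ∀ᶠ t in 𝓝[>] (0 : ℝ), 0 < t := self_mem_nhdsWithin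
  obtain ⟨t, ht, hCt⟩ := (hpos.and (nhdsWithin_le_nhds hnear)).exists
  exact ⟨t, ht, fun _ => le_of_lt ht, fun n => (hCt n).le⟩

noncomputable def belowLevel (V : Matrix (Fin K) (Fin K) ℝ) (z γ : Fin K → ℝ) (β : ℝ)
    (p : Fin K → ℝ) : Finset (Fin K) :=
  {k | SIR V z p k / γ k ≤ β}

lemma mem_belowLevel {β : ℝ} : k ∈ belowLevel V z γ β p ↔ SIR V z p k / γ k ≤ β := by
  simp [belowLevel]

variable (hV : ∀ i j, 0 ≤ V i j) (hz : ∀ k, 0 < z k) (hγ : ∀ k, 0 < γ k)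
  (hC : ∀ n k, 0 ≤ C n k) (hirr : MatIrred V) {β : ℝ} (hβ : 0 < β)
include hV hz hγ hC hirr hβ

lemma exists_belowLevel_ssubset (hp : p ∈ Pset C phat) (hpβ : ∀ k, β ≤ SIR V z p k / γ k)
    (hne : (belowLevel V z γ β p).Nonempty) (hne_univ : belowLevel V z γ β p ≠ univ) :
    ∃ q ∈ Pset C phat, (∀ k, β ≤ SIR V z q k / γ k) ∧
      belowLevel V z γ β q ⊂ belowLevel V z γ β p := by
  set S := belowLevel V z γ β p
  have hp_pos : ∀ k, 0 < p k := fun k =>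
    pos_of_SIR_pos hp.1 ((div_pos_iff_of_pos_right (hγ k)).1 (hβ.trans_le (hpβ k)))
  obtain ⟨i, hiS, j, hjS, hVij⟩ := hirr S (by simpa using hne) (by simpa using hne_univ)
  replace hiS : i ∈ S := hiS
  replace hjS : j ∉ S := hjS
  obtain ⟨c, hc0, hc1, hcβ⟩ := exists_lt_one_forall_lt_mul (P := (· ∉ S))
    (a := fun k => SIR V z p k / γ k) fun k hk => lt_of_not_ge (mem_belowLevel.not.1 hk)
  set q : Fin K → ℝ := fun k => if k ∈ S then p k else c * p k
  have hqS : ∀ k ∈ S, q k = p k := fun k hk => if_pos hk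
  have hqSc : ∀ k ∉ S, q k = c * p k := fun k hk => if_neg hk
  have hqp : q ≤ p := fun k => by
    by_cases hk : k ∈ S
    · exact (hqS k hk).le
    · exact (hqSc k hk).trans_le (mul_le_of_le_one_left (hp_pos k).le hc1.le)
  have hq : 0 ≤ q := fun k => by
    by_cases hk : k ∈ S
    · exact (hqS k hk).ge.trans' (hp_pos k).le
    · exact (hqSc k hk).ge.trans' (mul_pos hc0 (hp_pos k)).le
  have hq_above : ∀ k ∉ S, β < SIR V z q k / γ k := fun k hk =>
    calc β < c * (SIR V z p k / γ k) := hcβ k hk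
      _ = c * SIR V z p k / γ k := (mul_div_assoc ..).symm
      _ ≤ SIR V z q k / γ k :=
        div_le_div_of_nonneg_right (mul_SIR_le_SIR_of_le hV hz hq hqp (hqSc k hk)) (hγ k).le
  have hq_below : ∀ k ∈ S, β ≤ SIR V z q k / γ k := fun k hk =>
    (hpβ k).trans <| div_le_div_of_nonneg_right
      (by simpa using mul_SIR_le_SIR_of_le hV hz hq hqp (c := 1) (by simp [hqS k hk]))
      (hγ k).le
  have hq_i : β < SIR V z q i / γ i := by
    have hVq : (V *ᵥ q) i < (V *ᵥ p) i := Matrix.mulVec_apply_lt_mulVec_apply hV hqp hVij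
      ((hqSc j hjS).trans_lt (mul_lt_of_lt_one_left (hp_pos j) hc1))
    exact (hpβ i).trans_lt <| div_lt_div_of_pos_right
      (SIR_lt_SIR_of_mulVec_lt hV hz hq (hqS i hiS) (hp_pos i) hVq) (hγ i)
  refine ⟨q, mem_Pset_of_le hC hp hq hqp, fun k => ?_, ?_⟩
  · by_cases hk : k ∈ S
    · exact hq_below k hk
    · exact (hq_above k hk).le
  · refine (ssubset_iff_of_subset fun k hk => ?_).2 ⟨i, hiS, fun hi => ?_⟩
    · by_contra hkS
      exact (hq_above k hkS).not_ge (mem_belowLevel.1 hk)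
    · exact hq_i.not_ge (mem_belowLevel.1 hi)

lemma exists_mem_Pset_forall_lt (hp : p ∈ Pset C phat) (hpβ : ∀ k, β ≤ SIR V z p k / γ k)
    (hne_univ : belowLevel V z γ β p ≠ univ) :
    ∃ q ∈ Pset C phat, ∀ k, β < SIR V z q k / γ k := by
  obtain ⟨S, hS⟩ : ∃ S, belowLevel V z γ β p = S := ⟨_, rfl⟩
  induction S using Finset.strongInduction generalizing p with
  | H S ih =>
    rcases S.eq_empty_or_nonempty with rfl | hne
    · exact ⟨p, hp, fun k => lt_of_not_ge fun hk => by simpa [hS] using mem_belowLevel.2 hk⟩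
    · obtain ⟨q, hq, hqβ, hsub⟩ :=
        exists_belowLevel_ssubset hV hz hγ hC hirr hβ hp hpβ (hS ▸ hne) hne_univ
      exact ih _ (hS ▸ hsub) hq hqβ ((hsub.trans_le (subset_univ _)).ne) rfl

end SIR

theorem stmt3_general    {K N : ℕ} (hK : 2 ≤ K)
    (V : Matrix (Fin K) (Fin K) ℝ) (z γ : Fin K → ℝ)
    (C : Matrix (Fin N) (Fin K) ℝ) (phat : Fin N → ℝ)
    (hV : ∀ i j, 0 ≤ V i j)
    (hz : ∀ k, 0 < z k) (hγ : ∀ k, 0 < γ k)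
    (hC : ∀ n k, C n k = 0 ∨ C n k = 1)
    (hphat : ∀ n, 0 < phat n)
    (hirr : MatIrred V)
    (pbar : Fin K → ℝ) (hbal : MaxMinBalanced V z γ C phat pbar) :
    ∃ β : ℝ, 0 < β ∧ ∀ k, γ k / SIR V z pbar k = β := by
  have : Nonempty (Fin K) := ⟨⟨0, by omega⟩⟩
  have hC_nonneg : ∀ n k, 0 ≤ C n k := fun n k => by rcases hC n k with h | h <;> simp [h]
  set β := ⨅ k, SIR V z pbar k / γ k
  have hβ_le : ∀ k, β ≤ SIR V z pbar k / γ k := ciInf_le (Finite.bddBelow_range _)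
  have hβ_pos : 0 < β := by
    obtain ⟨t, ht, hp₀⟩ := exists_pos_const_mem_Pset C hphat
    obtain ⟨k, hk⟩ := exists_eq_ciInf_of_finite (f := fun k => SIR V z (fun _ => t) k / γ k)
    exact (hk ▸ div_pos (SIR_pos hV hz hp₀.1 ht) (hγ k)).trans_le (hbal.2 _ hp₀)
  have hβ_eq : ∀ k, SIR V z pbar k / γ k = β := by
    by_contra! ⟨k, hk⟩
    have hk_above : k ∉ belowLevel V z γ β pbar := fun h =>
      hk ((mem_belowLevel.1 h).antisymm (hβ_le k))
    obtain ⟨q, hq, hqβ⟩ := exists_mem_Pset_forall_lt hV hz hγ hC_nonneg hirr hβ_pos hbal.1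
      hβ_le fun h => hk_above (h ▸ mem_univ k)
    obtain ⟨k', hk'⟩ := exists_eq_ciInf_of_finite (f := fun k => SIR V z q k / γ k)
    exact (hk' ▸ hqβ k').not_ge (hbal.2 q hq)
  exact ⟨β⁻¹, inv_pos.2 hβ_pos, fun k => by rw [← hβ_eq k, inv_div]⟩

theorem stmt3    {K N : ℕ} (hK : 2 ≤ K) (hN : 1 ≤ N)
    (V : Matrix (Fin K) (Fin K) ℝ) (z γ : Fin K → ℝ)
    (C : Matrix (Fin N) (Fin K) ℝ) (phat : Fin N → ℝ)
    (hV : ∀ i j, 0 ≤ V i j) (hVdiag : ∀ i, V i i = 0)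
    (hz : ∀ k, 0 < z k) (hγ : ∀ k, 0 < γ k)
    (hC : ∀ n k, C n k = 0 ∨ C n k = 1) (hCcol : ∀ k, ∃ n, C n k = 1)
    (hphat : ∀ n, 0 < phat n)
    (hirr : MatIrred V)
    (pbar : Fin K → ℝ) (hbal : MaxMinBalanced V z γ C phat pbar) :
    ∃ β : ℝ, 0 < β ∧ ∀ k, γ k / SIR V z pbar k = β :=
  stmt3_general hK V z γ C phat hV hz hγ hC hphat hirr pbar hbal
end

section
/- Suppose the gain matrix V is irreducible and p̄ ∈ P is the max-min SIR-balanced power vector. Then the set of active power constraints at p̄ consists exactly of the indices of maximal spectral radius: N₀(p̄) = {n ∈ {1,…,N} : ρ(B^(n)) = max_{1≤m≤N} ρ(B^(m))}. -/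
open Matrix

/-!
Perron–Frobenius for the irreducible nonnegative matrices `B⁽ⁿ⁾`: each has a positive
eigenvector for `ρ(B⁽ⁿ⁾)`, and pairing with a positive left eigenvector shows that for `y ≥ 0`,
`B y < c y` forces `ρ(B) < c` and `c y < B y` forces `c < ρ(B)` (`<` in the pointwise order).

Let `R = maxₙ ρ(B⁽ⁿ⁾)`, attained at `m₀`. Rescaling the Perron vector of `B⁽ᵐ⁰⁾` gives a feasible
power vector at which every `SIR_k / γ_k` equals `1 / R`, so the optimum `p̄` satisfies
`Γ (V p̄ + z) ≤ R p̄`; as `B⁽ᵐ⁰⁾ p̄ ≤ Γ (V p̄ + z)`, strictness anywhere would give `ρ(B⁽ᵐ⁰⁾) < R`.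
Hence `Γ (V p̄ + z) = R p̄`, and `B⁽ⁿ⁾ p̄ = Γ (V p̄ + gₙ(p̄) z)` equals `R p̄` if `gₙ(p̄) = 1` and
is `< R p̄` if `gₙ(p̄) < 1`, so `gₙ(p̄) = 1` exactly when `ρ(B⁽ⁿ⁾) = R`.
-/

open Finset Filter Topology

theorem exists_pos_smul_le {ι : Type*} [Finite ι] (u : ι → ℝ) {v : ι → ℝ} (hv : ∀ i, 0 < v i) :
    ∃ ε : ℝ, 0 < ε ∧ ε • u ≤ v := by
  have h : ∀ᶠ ε in 𝓝[>] (0 : ℝ), ∀ i, ε * u i < v i := eventually_all.2 fun i =>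
    (((continuous_mul_const (u i)).tendsto' 0 0 (zero_mul _)).mono_left nhdsWithin_le_nhds).eventually
      (eventually_lt_nhds (hv i))
  obtain ⟨ε, hε, hε0⟩ := (h.and self_mem_nhdsWithin).exists
  exact ⟨ε, hε0, fun i => (hε i).le⟩

section Nonneg

variable {ι : Type*} [Fintype ι] {M : Matrix ι ι ℝ} {y : ι → ℝ}

theorem mulVec_nonneg_of_nonneg {κ : Type*} {A : Matrix κ ι ℝ} (hA : ∀ i j, 0 ≤ A i j)
    (hy : 0 ≤ y) : 0 ≤ A *ᵥ y :=
  fun i => sum_nonneg fun j _ => mul_nonneg (hA i j) (hy j)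

theorem mul_le_mulVec_apply {κ : Type*} {A : Matrix κ ι ℝ} (hA : ∀ i j, 0 ≤ A i j) (hy : 0 ≤ y)
    (i : κ) (j : ι) : A i j * y j ≤ (A *ᵥ y) i :=
  single_le_sum (f := fun j => A i j * y j) (fun j _ => mul_nonneg (hA i j) (hy j)) (mem_univ j)

theorem le_one_add_mulVec [DecidableEq ι] (hM : ∀ i j, 0 ≤ M i j) (hy : 0 ≤ y) :
    y ≤ (1 + M) *ᵥ y := by
  rw [add_mulVec, one_mulVec]
  exact le_add_of_nonneg_right (mulVec_nonneg_of_nonneg hM hy)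

theorem le_one_add_pow_mulVec [DecidableEq ι] (hM : ∀ i j, 0 ≤ M i j) (hy : 0 ≤ y) (m : ℕ) :
    y ≤ (1 + M) ^ m *ᵥ y := by
  induction m with
  | zero => simp
  | succ m ih =>
    rw [pow_succ', ← mulVec_mulVec]
    exact ih.trans (le_one_add_mulVec hM (hy.trans ih))

theorem dotProduct_pos_of_pos_of_lt {v w : ι → ℝ} (hv : ∀ i, 0 < v i) (hw : 0 < w) :
    0 < v ⬝ᵥ w := by
  obtain ⟨hw0, i, hi⟩ := Pi.lt_def.1 hw
  exact sum_pos' (fun j _ => mul_nonneg (hv j).le (hw0 j)) ⟨i, mem_univ i, mul_pos (hv i) hi⟩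

end Nonneg

namespace MatIrred

variable {ι : Type*} [Fintype ι] {M M' : Matrix ι ι ℝ}

theorem of_pos_imp (hM : MatIrred M) (h : ∀ i j, 0 < M i j → 0 < M' i j) : MatIrred M' := by
  intro S hS hSu
  obtain ⟨i, hi, j, hj, hij⟩ := hM S hS hSu
  exact ⟨i, hi, j, hj, h i j hij⟩

theorem transpose (hM : MatIrred M) : MatIrred Mᵀ := by
  intro S hS hSu
  obtain ⟨i, hi, j, hj, hij⟩ := hM Sᶜ (Set.nonempty_compl.2 hSu) (Set.compl_ne_univ.2 hS)
  exact ⟨j, not_not.1 hj, i, hi, hij⟩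

theorem exists_mulVec_pos_of_apply_eq_zero (hM : MatIrred M) (hM0 : ∀ i j, 0 ≤ M i j)
    {y : ι → ℝ} (hy : 0 ≤ y) (hy0 : y ≠ 0) {i : ι} (hi : y i = 0) :
    ∃ a, y a = 0 ∧ 0 < (M *ᵥ y) a := by
  obtain ⟨a, ha, b, hb, hab⟩ := hM {k | y k = 0} ⟨i, hi⟩
    fun hu => hy0 (funext fun k => (Set.eq_univ_iff_forall.1 hu k : y k = 0))
  exact ⟨a, ha, (mul_pos hab ((hy b).lt_of_ne' hb)).trans_le (mul_le_mulVec_apply hM0 hy a b)⟩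

theorem pos_of_mulVec_le (hM : MatIrred M) (hM0 : ∀ i j, 0 ≤ M i j) {y : ι → ℝ} (hy : 0 ≤ y)
    (hy0 : y ≠ 0) {c : ℝ} (h : M *ᵥ y ≤ c • y) (i : ι) : 0 < y i := by
  by_contra hi
  obtain ⟨a, ha, hpos⟩ :=
    hM.exists_mulVec_pos_of_apply_eq_zero hM0 hy hy0 (le_antisymm (not_lt.1 hi) (hy i))
  exact hpos.not_ge (by simpa [ha] using h a)

theorem exists_pow_mulVec_pos [DecidableEq ι] (hM : MatIrred M) (hM0 : ∀ i j, 0 ≤ M i j)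
    {w : ι → ℝ} (hw : 0 ≤ w) (hw0 : w ≠ 0) : ∃ m : ℕ, ∀ i, 0 < ((1 + M) ^ m *ᵥ w) i := by
  induction hcard : #{i | w i = 0} using Nat.strong_induction_on generalizing w with
  | _ n ih =>
  by_cases hpos : ∀ i, 0 < w i
  · exact ⟨0, by simpa using hpos⟩
  set w' := (1 + M) *ᵥ w
  have hww' : w ≤ w' := le_one_add_mulVec hM0 hw
  have hsub : univ.filter (fun i => w' i = 0) ⊆ univ.filter (fun i => w i = 0) := fun i hi => by
    simp only [mem_filter, mem_univ, true_and] at hi ⊢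
    exact le_antisymm (hi ▸ hww' i) (hw i)
  have hssub : univ.filter (fun i => w' i = 0) ⊂ univ.filter (fun i => w i = 0) := by
    obtain ⟨i, hi⟩ := not_forall.1 hpos
    obtain ⟨a, ha, hMa⟩ :=
      hM.exists_mulVec_pos_of_apply_eq_zero hM0 hw hw0 (le_antisymm (not_lt.1 hi) (hw i))
    refine (ssubset_iff_of_subset hsub).2 ⟨a, by simpa using ha, ?_⟩
    have : 0 < w' a := by simpa [w', add_mulVec, ha] using hMa
    simpa using this.ne'
  obtain ⟨m, hm⟩ := ih _ (hcard ▸ card_lt_card hssub) (hw.trans hww')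
    (fun h => hw0 (le_antisymm (h ▸ hww') hw)) rfl
  exact ⟨m + 1, by rwa [pow_succ, ← mulVec_mulVec]⟩

end MatIrred

section CollatzWielandt

variable {ι : Type*} [Fintype ι] {M : Matrix ι ι ℝ}

theorem le_sum_of_smul_le_mulVec (hM0 : ∀ i j, 0 ≤ M i j) {c : ℝ} {x : ι → ℝ}
    (hx : x ∈ stdSimplex ℝ ι) (h : c • x ≤ M *ᵥ x) : c ≤ ∑ i, ∑ j, M i j :=
  calc c = ∑ i, c * x i := by rw [← mul_sum, hx.2, mul_one]
    _ ≤ ∑ i, (M *ᵥ x) i := sum_le_sum fun i _ => h i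
    _ ≤ ∑ i, ∑ j, M i j := sum_le_sum fun i _ => sum_le_sum fun j _ =>
      mul_le_of_le_one_right (hM0 i j) (mem_Icc_of_mem_stdSimplex hx j).2

theorem exists_collatzWielandt_max [Nonempty ι] (hM0 : ∀ i j, 0 ≤ M i j) :
    ∃ r : ℝ, ∃ x, 0 ≤ x ∧ x ≠ 0 ∧ r • x ≤ M *ᵥ x ∧
      ∀ (c : ℝ) y, 0 ≤ y → y ≠ 0 → c • y ≤ M *ᵥ y → c ≤ r := by
  classical
  set E : Set (ℝ × (ι → ℝ)) :=
    (Set.Icc 0 (∑ i, ∑ j, M i j) ×ˢ stdSimplex ℝ ι) ∩ {p | p.1 • p.2 ≤ M *ᵥ p.2}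
  have hE : IsCompact E := (isCompact_Icc.prod (isCompact_stdSimplex ℝ ι)).inter_right
    (isClosed_le (by fun_prop) (by fun_prop))
  obtain ⟨i⟩ := ‹Nonempty ι›
  have hE0 : ((0 : ℝ), Pi.single i (1 : ℝ)) ∈ E :=
    ⟨⟨⟨le_rfl, sum_nonneg fun i _ => sum_nonneg fun j _ => hM0 i j⟩, single_mem_stdSimplex ℝ i⟩,
      by simpa using mulVec_nonneg_of_nonneg hM0 (Pi.single_nonneg.2 zero_le_one)⟩
  obtain ⟨⟨r, x⟩, ⟨⟨⟨hr0, -⟩, hx⟩, hrx⟩, hmax⟩ :=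
    hE.exists_isMaxOn ⟨_, hE0⟩ continuous_fst.continuousOn
  refine ⟨r, x, hx.1, fun h => by simpa [h] using hx.2, hrx, fun c y hy hy0 hcy => ?_⟩
  rcases le_or_gt c 0 with hc | hc
  · exact hc.trans hr0
  obtain ⟨-, j, hj⟩ := Pi.lt_def.1 (hy.lt_of_ne' hy0)
  have hs : 0 < ∑ i, y i := sum_pos' (fun i _ => hy i) ⟨j, mem_univ j, hj⟩
  have hy' : (∑ i, y i)⁻¹ • y ∈ stdSimplex ℝ ι :=
    ⟨fun i => mul_nonneg (inv_nonneg.2 hs.le) (hy i), by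
      simp only [Pi.smul_apply, smul_eq_mul, ← mul_sum, inv_mul_cancel₀ hs.ne']⟩
  have hcy' : c • (∑ i, y i)⁻¹ • y ≤ M *ᵥ ((∑ i, y i)⁻¹ • y) := by
    rw [mulVec_smul, smul_comm]
    exact smul_le_smul_of_nonneg_left hcy (inv_nonneg.2 hs.le)
  exact isMaxOn_iff.1 hmax (c, _) ⟨⟨⟨hc.le, le_sum_of_smul_le_mulVec hM0 hy' hcy'⟩, hy'⟩, hcy'⟩

end CollatzWielandt

section Spectrum

variable {ι : Type*} [Fintype ι] [DecidableEq ι]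

theorem Matrix.mem_spectrum_iff_exists_mulVec_eq_smul {K : Type*} [Field K] {A : Matrix ι ι K}
    {μ : K} : μ ∈ spectrum K A ↔ ∃ v ≠ 0, A *ᵥ v = μ • v := by
  rw [← spectrum_toLin', ← Module.End.hasEigenvalue_iff_mem_spectrum]
  constructor
  · intro h
    obtain ⟨v, hv⟩ := h.exists_hasEigenvector
    exact ⟨v, hv.2, by simpa using Module.End.mem_eigenspace_iff.1 hv.1⟩
  · rintro ⟨v, hv0, hv⟩
    exact Module.End.hasEigenvalue_of_hasEigenvector
      ⟨Module.End.mem_eigenspace_iff.2 (by simpa using hv), hv0⟩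

theorem specRad_eq_of_eigenvector {M : Matrix ι ι ℝ} (hM0 : ∀ i j, 0 ≤ M i j) {r : ℝ}
    {x : ι → ℝ} (hx0 : x ≠ 0) (hx : M *ᵥ x = r • x)
    (hmax : ∀ (c : ℝ) y, 0 ≤ y → y ≠ 0 → c • y ≤ M *ᵥ y → c ≤ r) : specRad M = r := by
  have hle : ∀ μ ∈ spectrum ℂ (M.map fun x => (x : ℂ)), ‖μ‖ ≤ r := by
    intro μ hμ
    obtain ⟨v, hv0, hv⟩ := mem_spectrum_iff_exists_mulVec_eq_smul.1 hμ
    refine hmax _ (fun i => ‖v i‖) (fun i => norm_nonneg _)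
      (fun h => hv0 (funext fun i => norm_eq_zero.1 (congrFun h i))) fun i => ?_
    calc ‖μ‖ * ‖v i‖ = ‖((M.map fun x => (x : ℂ)) *ᵥ v) i‖ := by
          rw [hv, Pi.smul_apply, smul_eq_mul, norm_mul]
      _ ≤ ∑ j, ‖(M.map fun x => (x : ℂ)) i j * v j‖ := norm_sum_le _ _
      _ = (M *ᵥ fun i => ‖v i‖) i := sum_congr rfl fun j _ => by
          simp [abs_of_nonneg (hM0 i j)]
  have hr : (r : ℂ) ∈ spectrum ℂ (M.map fun x => (x : ℂ)) := by
    refine mem_spectrum_iff_exists_mulVec_eq_smul.2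
      ⟨fun i => (x i : ℂ), fun h => hx0 (funext fun i => by simpa using congrFun h i), ?_⟩
    ext i
    exact (RingHom.map_mulVec Complex.ofRealHom M x i).symm.trans (by simp [hx])
  have hr0 : 0 ≤ r := (norm_nonneg _).trans (hle _ hr)
  exact IsGreatest.csSup_eq ⟨⟨r, hr, by simp [abs_of_nonneg hr0]⟩,
    by rintro _ ⟨μ, hμ, rfl⟩; exact hle μ hμ⟩

theorem specRad_transpose (M : Matrix ι ι ℝ) : specRad Mᵀ = specRad M := by
  have : spectrum ℂ (Mᵀ.map fun x => (x : ℂ)) = spectrum ℂ (M.map fun x => (x : ℂ)) := by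
    ext μ
    rw [transpose_map, mem_spectrum_iff_isRoot_charpoly, mem_spectrum_iff_isRoot_charpoly,
      charpoly_transpose]
  rw [specRad, specRad, this]

end Spectrum

namespace MatIrred

variable {ι : Type*} [Fintype ι] [DecidableEq ι] [Nonempty ι] {M : Matrix ι ι ℝ}

theorem perron_frobenius (hM : MatIrred M) (hM0 : ∀ i j, 0 ≤ M i j) :
    ∃ x, (∀ i, 0 < x i) ∧ M *ᵥ x = specRad M • x ∧
      ∀ (c : ℝ) y, 0 ≤ y → y ≠ 0 → c • y ≤ M *ᵥ y → c ≤ specRad M := by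
  obtain ⟨r, x, hx, hx0, hrx, hmax⟩ := exists_collatzWielandt_max hM0
  -- Otherwise `u = (1 + M) ^ m x` has `r u < M u` in every coordinate, contradicting maximality.
  have heig : M *ᵥ x = r • x := by
    by_contra hne
    obtain ⟨m, hm⟩ := hM.exists_pow_mulVec_pos hM0 (sub_nonneg.2 hrx) (sub_ne_zero.2 hne)
    set u := (1 + M) ^ m *ᵥ x
    have hxu : x ≤ u := le_one_add_pow_mulVec hM0 hx m
    have hu : M *ᵥ u - r • u = (1 + M) ^ m *ᵥ (M *ᵥ x - r • x) := by
      rw [mulVec_sub, mulVec_smul, mulVec_mulVec, mulVec_mulVec,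
        (((Commute.one_left M).add_left (Commute.refl M)).pow_left m).eq]
    obtain ⟨ε, hε, hεu⟩ := exists_pos_smul_le u (v := M *ᵥ u - r • u) (by rwa [hu])
    have := hmax (r + ε) u (hx.trans hxu) (fun h => hx0 (le_antisymm (h ▸ hxu) hx))
      (by rw [add_smul]; exact le_sub_iff_add_le'.1 hεu)
    linarith
  rw [specRad_eq_of_eigenvector hM0 hx0 heig hmax]
  exact ⟨x, hM.pos_of_mulVec_le hM0 hx hx0 heig.le, heig, hmax⟩

theorem le_specRad_of_smul_le_mulVec (hM : MatIrred M) (hM0 : ∀ i j, 0 ≤ M i j) {c : ℝ}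
    {y : ι → ℝ} (hy : 0 ≤ y) (hy0 : y ≠ 0) (h : c • y ≤ M *ᵥ y) : c ≤ specRad M := by
  obtain ⟨-, -, -, hmax⟩ := hM.perron_frobenius hM0
  exact hmax c y hy hy0 h

theorem exists_pos_dotProduct_mulVec_eq (hM : MatIrred M) (hM0 : ∀ i j, 0 ≤ M i j) :
    ∃ v, (∀ i, 0 < v i) ∧ ∀ y, v ⬝ᵥ (M *ᵥ y) = specRad M * (v ⬝ᵥ y) := by
  obtain ⟨v, hv, heig, -⟩ := hM.transpose.perron_frobenius fun i j => hM0 j i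
  refine ⟨v, hv, fun y => ?_⟩
  rw [dotProduct_mulVec, ← mulVec_transpose, heig, specRad_transpose, smul_dotProduct, smul_eq_mul]

theorem specRad_lt_of_mulVec_lt (hM : MatIrred M) (hM0 : ∀ i j, 0 ≤ M i j) {c : ℝ}
    {y : ι → ℝ} (hy : 0 ≤ y) (h : M *ᵥ y < c • y) : specRad M < c := by
  obtain ⟨v, hv, hvM⟩ := hM.exists_pos_dotProduct_mulVec_eq hM0
  have hpos := dotProduct_pos_of_pos_of_lt hv (sub_pos.2 h)
  rw [dotProduct_sub, dotProduct_smul, hvM, smul_eq_mul, ← sub_mul] at hpos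
  exact sub_pos.1 (pos_of_mul_pos_left hpos (dotProduct_nonneg_of_nonneg (fun i => (hv i).le) hy))

theorem lt_specRad_of_lt_mulVec (hM : MatIrred M) (hM0 : ∀ i j, 0 ≤ M i j) {c : ℝ}
    {y : ι → ℝ} (hy : 0 ≤ y) (h : c • y < M *ᵥ y) : c < specRad M := by
  obtain ⟨v, hv, hvM⟩ := hM.exists_pos_dotProduct_mulVec_eq hM0
  have hpos := dotProduct_pos_of_pos_of_lt hv (sub_pos.2 h)
  rw [dotProduct_sub, dotProduct_smul, hvM, smul_eq_mul, ← sub_mul] at hpos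
  exact sub_pos.1 (pos_of_mul_pos_left hpos (dotProduct_nonneg_of_nonneg (fun i => (hv i).le) hy))

end MatIrred

section PowerControl

variable {K N : ℕ} {V : Matrix (Fin K) (Fin K) ℝ} {z γ : Fin K → ℝ}
  {C : Matrix (Fin N) (Fin K) ℝ} {phat : Fin N → ℝ}

def interference (V : Matrix (Fin K) (Fin K) ℝ) (z γ : Fin K → ℝ) (s : ℝ) (p : Fin K → ℝ) :
    Fin K → ℝ :=
  fun k => γ k * ((V *ᵥ p) k + s * z k)

theorem Bmat_apply (n : Fin N) (i j : Fin K) :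
    Bmat V z γ C phat n i j = γ i * (V i j + (phat n)⁻¹ * (z i * C n j)) := by
  simp [Bmat, diagonal_mul, vecMulVec_apply]

theorem Bmat_mulVec (n : Fin N) (p : Fin K → ℝ) :
    Bmat V z γ C phat n *ᵥ p = interference V z γ (gcon C phat n p) p := by
  ext k
  rw [Bmat, ← mulVec_mulVec, mulVec_diagonal, add_mulVec, smul_mulVec, vecMulVec_mulVec]
  simp only [interference, gcon, Pi.add_apply, Pi.smul_apply, smul_eq_mul, op_smul_eq_mul, mulVec]
  ring

theorem Bmat_nonneg (hV : ∀ i j, 0 ≤ V i j) (hz : ∀ k, 0 ≤ z k) (hγ : ∀ k, 0 ≤ γ k)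
    (hC : ∀ n k, 0 ≤ C n k) (hphat : ∀ n, 0 ≤ phat n) (n : Fin N) (i j : Fin K) :
    0 ≤ Bmat V z γ C phat n i j := by
  rw [Bmat_apply]
  have := hV i j; have := hz i; have := hγ i; have := hC n j; have := hphat n
  positivity

theorem Bmat_irred (hirr : MatIrred V) (hz : ∀ k, 0 ≤ z k) (hγ : ∀ k, 0 < γ k)
    (hC : ∀ n k, 0 ≤ C n k) (hphat : ∀ n, 0 ≤ phat n) (n : Fin N) :
    MatIrred (Bmat V z γ C phat n) :=
  hirr.of_pos_imp fun i j hij => by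
    rw [Bmat_apply]
    have := hz i; have := hC n j; have := hphat n
    exact mul_pos (hγ i) (add_pos_of_pos_of_nonneg hij (by positivity))

theorem gcon_smul (n : Fin N) (c : ℝ) (p : Fin K → ℝ) :
    gcon C phat n (c • p) = c * gcon C phat n p := by
  rw [gcon, gcon, mulVec_smul, Pi.smul_apply, smul_eq_mul, mul_div_assoc]

theorem gcon_le_one_iff {n : Fin N} (hphat : 0 < phat n) {p : Fin K → ℝ} :
    gcon C phat n p ≤ 1 ↔ (C *ᵥ p) n ≤ phat n :=
  div_le_one hphat

theorem interference_pos (hV : ∀ i j, 0 ≤ V i j) (hz : ∀ k, 0 < z k) (hγ : ∀ k, 0 < γ k)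
    {s : ℝ} (hs : 0 < s) {p : Fin K → ℝ} (hp : 0 ≤ p) (k : Fin K) :
    0 < interference V z γ s p k := by
  have : 0 ≤ (V *ᵥ p) k := mulVec_nonneg_of_nonneg hV hp k
  have := hz k; have := hγ k
  unfold interference
  positivity

theorem interference_mono (hz : ∀ k, 0 ≤ z k) (hγ : ∀ k, 0 ≤ γ k) {s t : ℝ} (hst : s ≤ t)
    (p : Fin K → ℝ) : interference V z γ s p ≤ interference V z γ t p := fun k => by
  unfold interference
  gcongr
  exacts [hγ k, hz k]

theorem interference_lt_of_lt [Nonempty (Fin K)] (hz : ∀ k, 0 < z k) (hγ : ∀ k, 0 < γ k)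
    {s t : ℝ} (hst : s < t) (p : Fin K → ℝ) :
    interference V z γ s p < interference V z γ t p := by
  refine Pi.lt_def.2 ⟨interference_mono (fun k => (hz k).le) (fun k => (hγ k).le) hst.le p,
    Classical.arbitrary _, ?_⟩
  unfold interference
  gcongr
  exacts [hγ _, hz _]

theorem SIR_div_eq (p : Fin K → ℝ) (k : Fin K) :
    SIR V z p k / γ k = p k / interference V z γ 1 p k := by
  rw [SIR, interference, one_mul, div_div, mul_comm]

theorem exists_mem_Pset_interference_eq [Nonempty (Fin K)] (hz : ∀ k, 0 < z k)
    (hγ : ∀ k, 0 < γ k) (hC : ∀ n k, 0 ≤ C n k) (hCcol : ∀ k, ∃ n, C n k = 1)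
    (hphat : ∀ n, 0 < phat n) (hB0 : ∀ n i j, 0 ≤ Bmat V z γ C phat n i j)
    (hBirr : ∀ n, MatIrred (Bmat V z γ C phat n)) {m₀ : Fin N}
    (hm₀ : ∀ m, specRad (Bmat V z γ C phat m) ≤ specRad (Bmat V z γ C phat m₀)) :
    ∃ x ∈ Pset C phat, interference V z γ 1 x = specRad (Bmat V z γ C phat m₀) • x := by
  obtain ⟨x, hx, heig, -⟩ := (hBirr m₀).perron_frobenius (hB0 m₀)
  have hx0 : 0 ≤ x := fun k => (hx k).le
  have hg : ∀ m, gcon C phat m x ≤ gcon C phat m₀ x := fun m => not_lt.1 fun h =>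
    (hm₀ m).not_gt ((hBirr m).lt_specRad_of_lt_mulVec (hB0 m) hx0 (by
      rw [← heig, Bmat_mulVec, Bmat_mulVec]
      exact interference_lt_of_lt hz hγ h x))
  have hg0 : 0 < gcon C phat m₀ x := by
    obtain ⟨k⟩ := ‹Nonempty (Fin K)›
    obtain ⟨m, hm⟩ := hCcol k
    have : 0 < (C *ᵥ x) m :=
      (by simpa [hm] using hx k : 0 < C m k * x k).trans_le (mul_le_mulVec_apply hC hx0 m k)
    exact (div_pos this (hphat m)).trans_le (hg m)
  set g := gcon C phat m₀ x
  refine ⟨g⁻¹ • x, ⟨smul_nonneg (inv_nonneg.2 hg0.le) hx0,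
    fun m => (gcon_le_one_iff (hphat m)).1 ?_⟩, ?_⟩
  · rw [gcon_smul]
    exact inv_mul_le_one_of_le₀ (hg m) hg0.le
  · calc interference V z γ 1 (g⁻¹ • x)
        = interference V z γ (gcon C phat m₀ (g⁻¹ • x)) (g⁻¹ • x) := by
          rw [gcon_smul, inv_mul_cancel₀ hg0.ne']
      _ = _ := by rw [← Bmat_mulVec, mulVec_smul, heig, smul_comm]

theorem interference_le_of_maxMinBalanced [Nonempty (Fin K)] (hV : ∀ i j, 0 ≤ V i j)
    (hz : ∀ k, 0 < z k) (hγ : ∀ k, 0 < γ k) {pbar x : Fin K → ℝ}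
    (hbal : MaxMinBalanced V z γ C phat pbar) (hx : x ∈ Pset C phat) {R : ℝ}
    (hxR : interference V z γ 1 x = R • x) : interference V z γ 1 pbar ≤ R • pbar := by
  have hIx : ∀ k, 0 < R * x k := fun k => by
    simpa [hxR] using interference_pos hV hz hγ one_pos hx.1 k
  have hR : 0 < R := pos_of_mul_pos_left (hIx (Classical.arbitrary _)) (hx.1 _)
  have hval : (⨅ k, SIR V z x k / γ k) = R⁻¹ := by
    have : ∀ k, SIR V z x k / γ k = R⁻¹ := fun k => by
      rw [SIR_div_eq, hxR, Pi.smul_apply, smul_eq_mul,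
        div_mul_cancel_right₀ (pos_of_mul_pos_right (hIx k) hR.le).ne']
    simp only [this, ciInf_const]
  intro k
  have h := (hbal.2 x hx).trans (ciInf_le (Finite.bddBelow_range _) k)
  rw [hval, SIR_div_eq, le_div_iff₀ (interference_pos hV hz hγ one_pos hbal.1.1 k)] at h
  exact (inv_mul_le_iff₀ hR).1 h

theorem interference_eq_of_maxMinBalanced [Nonempty (Fin K)] (hV : ∀ i j, 0 ≤ V i j)
    (hz : ∀ k, 0 < z k) (hγ : ∀ k, 0 < γ k) (hC : ∀ n k, 0 ≤ C n k)
    (hCcol : ∀ k, ∃ n, C n k = 1) (hphat : ∀ n, 0 < phat n)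
    (hB0 : ∀ n i j, 0 ≤ Bmat V z γ C phat n i j) (hBirr : ∀ n, MatIrred (Bmat V z γ C phat n))
    {m₀ : Fin N} (hm₀ : ∀ m, specRad (Bmat V z γ C phat m) ≤ specRad (Bmat V z γ C phat m₀))
    {pbar : Fin K → ℝ} (hbal : MaxMinBalanced V z γ C phat pbar) :
    interference V z γ 1 pbar = specRad (Bmat V z γ C phat m₀) • pbar := by
  obtain ⟨x, hx, hxR⟩ := exists_mem_Pset_interference_eq hz hγ hC hCcol hphat hB0 hBirr hm₀
  have hle := interference_le_of_maxMinBalanced hV hz hγ hbal hx hxR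
  by_contra hne
  refine lt_irrefl _ ((hBirr m₀).specRad_lt_of_mulVec_lt (hB0 m₀) hbal.1.1 ?_)
  rw [Bmat_mulVec]
  exact (interference_mono (fun k => (hz k).le) (fun k => (hγ k).le)
    ((gcon_le_one_iff (hphat m₀)).2 (hbal.1.2 m₀)) pbar).trans_lt (lt_of_le_of_ne hle hne)

theorem gcon_eq_one_iff_specRad_eq [Nonempty (Fin K)] (hV : ∀ i j, 0 ≤ V i j)
    (hz : ∀ k, 0 < z k) (hγ : ∀ k, 0 < γ k) (hphat : ∀ n, 0 < phat n)
    (hB0 : ∀ n i j, 0 ≤ Bmat V z γ C phat n i j) (hBirr : ∀ n, MatIrred (Bmat V z γ C phat n))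
    {p : Fin K → ℝ} (hp : p ∈ Pset C phat) {R : ℝ} (hR : ∀ m, specRad (Bmat V z γ C phat m) ≤ R)
    (hpR : interference V z γ 1 p = R • p) (n : Fin N) :
    gcon C phat n p = 1 ↔ specRad (Bmat V z γ C phat n) = R := by
  have hp0 : p ≠ 0 := fun h => (interference_pos hV hz hγ one_pos hp.1 (Classical.arbitrary _)).ne'
    (by rw [hpR, h, smul_zero, Pi.zero_apply])
  constructor
  · intro h
    refine le_antisymm (hR n) ((hBirr n).le_specRad_of_smul_le_mulVec (hB0 n) hp.1 hp0 ?_)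
    rw [Bmat_mulVec, h, hpR]
  · intro h
    by_contra hne
    have hlt : gcon C phat n p < 1 := lt_of_le_of_ne ((gcon_le_one_iff (hphat n)).2 (hp.2 n)) hne
    refine ((hBirr n).specRad_lt_of_mulVec_lt (hB0 n) hp.1 ?_).ne h
    rw [Bmat_mulVec, ← hpR]
    exact interference_lt_of_lt hz hγ hlt p

end PowerControl

theorem stmt11_general    {K N : ℕ} (hK : 2 ≤ K)
    (V : Matrix (Fin K) (Fin K) ℝ) (z γ : Fin K → ℝ)
    (C : Matrix (Fin N) (Fin K) ℝ) (phat : Fin N → ℝ)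
    (hV : ∀ i j, 0 ≤ V i j)
    (hz : ∀ k, 0 < z k) (hγ : ∀ k, 0 < γ k)
    (hC : ∀ n k, C n k = 0 ∨ C n k = 1) (hCcol : ∀ k, ∃ n, C n k = 1)
    (hphat : ∀ n, 0 < phat n)
    (hirr : MatIrred V)
    (pbar : Fin K → ℝ) (hbal : MaxMinBalanced V z γ C phat pbar) :
    activeSet C phat pbar =
      {n : Fin N | ∀ m, specRad (Bmat V z γ C phat m) ≤ specRad (Bmat V z γ C phat n)} := by
  have : Nonempty (Fin K) := ⟨⟨0, by omega⟩⟩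
  have hC0 : ∀ n k, 0 ≤ C n k := fun n k => by rcases hC n k with h | h <;> simp [h]
  have hB0 := Bmat_nonneg hV (fun k => (hz k).le) (fun k => (hγ k).le) hC0 (fun n => (hphat n).le)
  have hBirr := Bmat_irred hirr (fun k => (hz k).le) hγ hC0 (fun n => (hphat n).le)
  ext n
  have : Nonempty (Fin N) := ⟨n⟩
  obtain ⟨m₀, hm₀⟩ := Finite.exists_max fun m => specRad (Bmat V z γ C phat m)
  have key := gcon_eq_one_iff_specRad_eq hV hz hγ hphat hB0 hBirr hbal.1 hm₀
    (interference_eq_of_maxMinBalanced hV hz hγ hC0 hCcol hphat hB0 hBirr hm₀ hbal) n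
  constructor
  · rintro ⟨h, -⟩ m
    exact (hm₀ m).trans (key.1 h).ge
  · intro h
    have hn := key.2 (le_antisymm (hm₀ n) (h m₀))
    exact ⟨hn, fun m => hn ▸ (gcon_le_one_iff (hphat m)).2 (hbal.1.2 m)⟩

theorem stmt11    {K N : ℕ} (hK : 2 ≤ K) (hN : 1 ≤ N)
    (V : Matrix (Fin K) (Fin K) ℝ) (z γ : Fin K → ℝ)
    (C : Matrix (Fin N) (Fin K) ℝ) (phat : Fin N → ℝ)
    (hV : ∀ i j, 0 ≤ V i j) (hVdiag : ∀ i, V i i = 0)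
    (hz : ∀ k, 0 < z k) (hγ : ∀ k, 0 < γ k)
    (hC : ∀ n k, C n k = 0 ∨ C n k = 1) (hCcol : ∀ k, ∃ n, C n k = 1)
    (hphat : ∀ n, 0 < phat n)
    (hirr : MatIrred V)
    (pbar : Fin K → ℝ) (hbal : MaxMinBalanced V z γ C phat pbar) :
    activeSet C phat pbar =
      {n : Fin N | ∀ m, specRad (Bmat V z γ C phat m) ≤ specRad (Bmat V z γ C phat n)} :=
  stmt11_general hK V z γ C phat hV hz hγ hC hCcol hphat hirr pbar hbal
end
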